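/- arXiv:1803.01889 — 3 statements merged into one kernel-verified Lean document; each statement's English description precedes it below -/
import Mathlib

section
/- Let N ≥ 1, let w : ℝ → ℝ^N have bounded total variation, let ℓ ≥ 0, let α : ℝ → [0,∞) be Lebesgue integrable, and let g : ℝ × ℝ^N → ℝ^N satisfy ‖g(x,u) − g(x,v)‖ ≤ ℓ·‖u − v‖ for all x ∈ ℝ and all u, v ∈ ℝ^N, and ‖g(y,u) − g(x,u)‖ ≤ ∫_x^y α(s) ds for all x ≤ y and all u ∈ ℝ^N. Then the function h : ℝ → ℝ^N defined by h(x) := g(x, w(x)) has bounded total variation, and Tot.Var.(h) ≤ ℓ·Tot.Var.(w) + ∫_ℝ α(s) ds. -/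
/-!
Split the increment of `h x = g (x, w x)` over `[x, y]` through the intermediate value `g (x, w y)`:
the first part is at most `ℓ ‖w y - w x‖`, the second at most `V y - V x`, where `V` is a primitive
of `α`. Summing over a partition, the first parts add up to at most `ℓ · Tot.Var.(w)`, and the second
parts telescope, so that they are bounded by the total increment `∫ α` of the nondecreasing `V`.
-/

open Set MeasureTheory
open scoped ENNReal

section Variation

variable {α E F G : Type*} [LinearOrder α]
  [PseudoEMetricSpace E] [PseudoEMetricSpace F] [PseudoEMetricSpace G]

theorem eVariationOn_le_mul_add_of_edist_le {f : α → E} {w : α → F} {v : α → G} {s : Set α}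
    (C : ℝ≥0∞) (h : ∀ x ∈ s, ∀ y ∈ s, x ≤ y →
      edist (f x) (f y) ≤ C * edist (w x) (w y) + edist (v x) (v y)) :
    eVariationOn f s ≤ C * eVariationOn w s + eVariationOn v s := by
  refine iSup_le fun ⟨n, u, hu, us⟩ => ?_
  calc ∑ i ∈ Finset.range n, edist (f (u (i + 1))) (f (u i))
      ≤ ∑ i ∈ Finset.range n,
          (C * edist (w (u (i + 1))) (w (u i)) + edist (v (u (i + 1))) (v (u i))) := by
        refine Finset.sum_le_sum fun i _ => ?_
        rw [edist_comm (f _), edist_comm (w _), edist_comm (v _)]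
        exact h _ (us i) _ (us (i + 1)) (hu i.le_succ)
    _ = C * ∑ i ∈ Finset.range n, edist (w (u (i + 1))) (w (u i)) +
          ∑ i ∈ Finset.range n, edist (v (u (i + 1))) (v (u i)) := by
        rw [Finset.sum_add_distrib, Finset.mul_sum]
    _ ≤ C * eVariationOn w s + eVariationOn v s := by
        gcongr <;> exact eVariationOn.sum_le hu us

theorem MonotoneOn.eVariationOn_le_of_sub_le {v : α → ℝ} {s : Set α} {M : ℝ}
    (hv : MonotoneOn v s) (hM : ∀ x ∈ s, ∀ y ∈ s, x ≤ y → v y - v x ≤ M) :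
    eVariationOn v s ≤ ENNReal.ofReal M := by
  rw [eVariationOn.eq_biSup_inter_Icc]
  refine iSup₂_le fun p ⟨hp₁, hp₂, hp⟩ => ?_
  rw [hv.eVariationOn_eq hp₁ hp₂]
  exact ENNReal.ofReal_le_ofReal (hM _ hp₁ _ hp₂ hp)

end Variation

theorem eVariationOn_primitive_le_integral {α : ℝ → ℝ} (hα0 : ∀ s, 0 ≤ α s) (hα : Integrable α)
    (a : ℝ) : eVariationOn (fun x => ∫ s in a..x, α s) univ ≤ ENNReal.ofReal (∫ s, α s) := by
  have hinc (x y : ℝ) : (∫ s in a..y, α s) - ∫ s in a..x, α s = ∫ s in x..y, α s :=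
    intervalIntegral.integral_interval_sub_left hα.intervalIntegrable hα.intervalIntegrable
  refine MonotoneOn.eVariationOn_le_of_sub_le (fun x _ y _ hxy => ?_) fun x _ y _ hxy => ?_
  · exact sub_nonneg.1 (hinc x y ▸ intervalIntegral.integral_nonneg hxy fun s _ => hα0 s)
  · rw [hinc, intervalIntegral.integral_of_le hxy]
    exact setIntegral_le_integral hα (Filter.Eventually.of_forall hα0)

theorem stmt0_general (N : ℕ)
    (w : ℝ → EuclideanSpace ℝ (Fin N))
    (hw : BoundedVariationOn w Set.univ)
    (ℓ : ℝ) (hℓ : 0 ≤ ℓ)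
    (α : ℝ → ℝ) (hα0 : ∀ s, 0 ≤ α s) (hαint : MeasureTheory.Integrable α)
    (g : ℝ × EuclideanSpace ℝ (Fin N) → EuclideanSpace ℝ (Fin N))
    (hLip : ∀ (x : ℝ) (u v : EuclideanSpace ℝ (Fin N)),
      ‖g (x, u) - g (x, v)‖ ≤ ℓ * ‖u - v‖)
    (hx : ∀ (x y : ℝ) (u : EuclideanSpace ℝ (Fin N)), x ≤ y →
      ‖g (y, u) - g (x, u)‖ ≤ ∫ s in x..y, α s) :
    BoundedVariationOn (fun x => g (x, w x)) Set.univ ∧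
      eVariationOn (fun x => g (x, w x)) Set.univ ≤
        ENNReal.ofReal ℓ * eVariationOn w Set.univ + ENNReal.ofReal (∫ s, α s) := by
  set V : ℝ → ℝ := fun x => ∫ s in (0 : ℝ)..x, α s
  have hstep : ∀ x ∈ univ, ∀ y ∈ univ, x ≤ y → edist (g (x, w x)) (g (y, w y)) ≤
      ENNReal.ofReal ℓ * edist (w x) (w y) + edist (V x) (V y) := by
    intro x _ y _ hxy
    have hV : ∫ s in x..y, α s ≤ dist (V x) (V y) := by
      rw [dist_comm, Real.dist_eq, intervalIntegral.integral_interval_sub_left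
        hαint.intervalIntegrable hαint.intervalIntegrable]
      exact le_abs_self _
    have hdist : dist (g (x, w x)) (g (y, w y)) ≤ ℓ * dist (w x) (w y) + dist (V x) (V y) :=
      calc dist (g (x, w x)) (g (y, w y))
          ≤ dist (g (x, w x)) (g (x, w y)) + dist (g (y, w y)) (g (x, w y)) :=
            dist_triangle_right _ _ _
        _ ≤ ℓ * dist (w x) (w y) + dist (V x) (V y) := by
            simp only [dist_eq_norm]
            exact add_le_add (hLip _ _ _) ((hx _ _ _ hxy).trans hV)
    rw [edist_dist, edist_dist, edist_dist, ← ENNReal.ofReal_mul hℓ,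
      ← ENNReal.ofReal_add (by positivity) dist_nonneg]
    exact ENNReal.ofReal_le_ofReal hdist
  have hvar := (eVariationOn_le_mul_add_of_edist_le _ hstep).trans
    (add_le_add_right (eVariationOn_primitive_le_integral hα0 hαint 0) _)
  exact ⟨ne_top_of_le_ne_top (by finiteness) hvar, hvar⟩

/-- If `w : ℝ → ℝ^N` has bounded total variation, `g = g(x,u)` is
`ℓ`-Lipschitz in `u` and its `x`-increments are controlled by the integral of an
integrable nonnegative function `α`, then `h x = g (x, w x)` has bounded total
variation, with `Tot.Var.(h) ≤ ℓ · Tot.Var.(w) + ∫ α`. -/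
theorem stmt0 (N : ℕ) (hN : 1 ≤ N)
    (w : ℝ → EuclideanSpace ℝ (Fin N))
    (hw : BoundedVariationOn w Set.univ)
    (ℓ : ℝ) (hℓ : 0 ≤ ℓ)
    (α : ℝ → ℝ) (hα0 : ∀ s, 0 ≤ α s) (hαint : MeasureTheory.Integrable α)
    (g : ℝ × EuclideanSpace ℝ (Fin N) → EuclideanSpace ℝ (Fin N))
    (hLip : ∀ (x : ℝ) (u v : EuclideanSpace ℝ (Fin N)),
      ‖g (x, u) - g (x, v)‖ ≤ ℓ * ‖u - v‖)
    (hx : ∀ (x y : ℝ) (u : EuclideanSpace ℝ (Fin N)), x ≤ y →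
      ‖g (y, u) - g (x, u)‖ ≤ ∫ s in x..y, α s) :
    BoundedVariationOn (fun x => g (x, w x)) Set.univ ∧
      eVariationOn (fun x => g (x, w x)) Set.univ ≤
        ENNReal.ofReal ℓ * eVariationOn w Set.univ + ENNReal.ofReal (∫ s, α s) :=
  stmt0_general N w hw ℓ hℓ α hα0 hαint g hLip hx
end

section
/- Let N ≥ 1, let u, w : ℝ → ℝ^N have bounded total variation, let τ ≥ 0, let ℓ ≥ 0, let α : ℝ → [0,∞) be Lebesgue integrable, and let g : ℝ × ℝ^N → ℝ^N satisfy ‖g(x,p) − g(x,q)‖ ≤ ℓ·‖p − q‖ for all x ∈ ℝ and all p, q ∈ ℝ^N, and ‖g(y,p) − g(x,p)‖ ≤ ∫_x^y α(s) ds for all x ≤ y and all p ∈ ℝ^N. Define v(x) := u(x) + τ·g(x, w(x)). Then v has bounded total variation and |Tot.Var.(v) − Tot.Var.(u)| ≤ τ·(ℓ·Tot.Var.(w) + ∫_ℝ α(s) ds). -/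
/-! Write `v = u + h` with `h x = τ • g (x, w x)`. For `x ≤ y`, passing through `g (y, w x)` gives
`‖h y - h x‖ ≤ τ ℓ ‖w y - w x‖ + (A y - A x)` for the nondecreasing primitive `A x = τ ∫₀ˣ α`,
whose variation is at most `τ ∫ α`; hence `TV(h) ≤ τ (ℓ TV(w) + ∫ α)`, and the triangle
inequality for variations gives `|TV(u + h) - TV(u)| ≤ TV(h)`. -/

open MeasureTheory Set

section Variation

variable {α E F G : Type*} [LinearOrder α] [PseudoEMetricSpace E] [PseudoEMetricSpace F]
  [PseudoEMetricSpace G] {s : Set α}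

theorem eVariationOn_le_of_edist_le_add {f : α → E} {g : α → F} {h : α → G} (C : ENNReal)
    (hfgh : ∀ x ∈ s, ∀ y ∈ s, x ≤ y →
      edist (f y) (f x) ≤ C * edist (g y) (g x) + edist (h y) (h x)) :
    eVariationOn f s ≤ C * eVariationOn g s + eVariationOn h s := by
  refine iSup_le fun ⟨n, u, hu, us⟩ => ?_
  calc ∑ i ∈ Finset.range n, edist (f (u (i + 1))) (f (u i))
      ≤ ∑ i ∈ Finset.range n,
          (C * edist (g (u (i + 1))) (g (u i)) + edist (h (u (i + 1))) (h (u i))) :=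
        Finset.sum_le_sum fun i _ => hfgh _ (us i) _ (us (i + 1)) (hu i.le_succ)
    _ = C * ∑ i ∈ Finset.range n, edist (g (u (i + 1))) (g (u i))
          + ∑ i ∈ Finset.range n, edist (h (u (i + 1))) (h (u i)) := by
        rw [Finset.sum_add_distrib, Finset.mul_sum]
    _ ≤ C * eVariationOn g s + eVariationOn h s := by
        grw [eVariationOn.sum_le hu us, eVariationOn.sum_le hu us]

theorem MonotoneOn.eVariationOn_le_ofReal {f : α → ℝ} {M : ℝ} (hf : MonotoneOn f s)
    (hM : ∀ x ∈ s, ∀ y ∈ s, x ≤ y → f y - f x ≤ M) :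
    eVariationOn f s ≤ ENNReal.ofReal M := by
  rw [eVariationOn.eq_biSup_inter_Icc]
  refine iSup₂_le fun p ⟨hp₁, hp₂, hp⟩ => ?_
  rw [hf.eVariationOn_eq hp₁ hp₂]
  exact ENNReal.ofReal_le_ofReal (hM _ hp₁ _ hp₂ hp)

end Variation

section NormedGroup

variable {α E : Type*} [LinearOrder α] [SeminormedAddCommGroup E] {s : Set α} {u h : α → E}

theorem eVariationOn_add_le :
    eVariationOn (fun x => u x + h x) s ≤ eVariationOn u s + eVariationOn h s := by
  simpa using eVariationOn_le_of_edist_le_add (f := fun x => u x + h x) 1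
    fun x _ y _ _ => by simpa using edist_add_add_le (u y) (h y) (u x) (h x)

theorem eVariationOn_le_eVariationOn_add_add :
    eVariationOn u s ≤ eVariationOn (fun x => u x + h x) s + eVariationOn h s := by
  simpa using eVariationOn_le_of_edist_le_add (f := u) (g := fun x => u x + h x) 1
    fun x _ y _ _ => by
      simpa using edist_add_add_le (u y + h y) (-h y) (u x + h x) (-h x)

theorem BoundedVariationOn.add (hu : BoundedVariationOn u s) (hh : BoundedVariationOn h s) :
    BoundedVariationOn (fun x => u x + h x) s :=
  ne_top_of_le_ne_top (ENNReal.add_ne_top.2 ⟨hu, hh⟩) eVariationOn_add_le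

theorem BoundedVariationOn.abs_toReal_eVariationOn_add_sub_le (hu : BoundedVariationOn u s)
    (hh : BoundedVariationOn h s) :
    |(eVariationOn (fun x => u x + h x) s).toReal - (eVariationOn u s).toReal| ≤
      (eVariationOn h s).toReal := by
  have hle := ENNReal.toReal_le_add eVariationOn_add_le hu hh
  have hge := ENNReal.toReal_le_add eVariationOn_le_eVariationOn_add_add (hu.add hh) hh
  rw [abs_sub_le_iff]
  constructor <;> linarith

end NormedGroup

section SourceTerm

variable {E F : Type*} [SeminormedAddCommGroup E] [SeminormedAddCommGroup F] [NormedSpace ℝ F]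
  {g : ℝ × E → F} {w : ℝ → E} {α : ℝ → ℝ} {τ ℓ : ℝ}

theorem norm_smul_comp_sub_le (hτ : 0 ≤ τ)
    (hLip : ∀ (x : ℝ) (p q : E), ‖g (x, p) - g (x, q)‖ ≤ ℓ * ‖p - q‖)
    (hx : ∀ (x y : ℝ) (p : E), x ≤ y → ‖g (y, p) - g (x, p)‖ ≤ ∫ s in x..y, α s)
    {x y : ℝ} (hxy : x ≤ y) :
    ‖τ • g (y, w y) - τ • g (x, w x)‖ ≤ τ * ℓ * ‖w y - w x‖ + τ * ∫ s in x..y, α s := by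
  have hsplit : τ • g (y, w y) - τ • g (x, w x) =
      τ • ((g (y, w y) - g (y, w x)) + (g (y, w x) - g (x, w x))) := by
    rw [← smul_sub, sub_add_sub_cancel]
  rw [hsplit, norm_smul, Real.norm_of_nonneg hτ, mul_assoc, ← mul_add]
  gcongr
  exact (norm_add_le _ _).trans (add_le_add (hLip y _ _) (hx x y _ hxy))

theorem eVariationOn_smul_comp_le (hτ : 0 ≤ τ) (hα0 : ∀ s, 0 ≤ α s) (hαint : Integrable α)
    (hLip : ∀ (x : ℝ) (p q : E), ‖g (x, p) - g (x, q)‖ ≤ ℓ * ‖p - q‖)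
    (hx : ∀ (x y : ℝ) (p : E), x ≤ y → ‖g (y, p) - g (x, p)‖ ≤ ∫ s in x..y, α s) :
    eVariationOn (fun x => τ • g (x, w x)) univ ≤
      ENNReal.ofReal (τ * ℓ) * eVariationOn w univ + ENNReal.ofReal (τ * ∫ s, α s) := by
  set A : ℝ → ℝ := fun x => τ * ∫ s in 0..x, α s
  have hA : ∀ x y, A y - A x = τ * ∫ s in x..y, α s := fun x y => by
    rw [← mul_sub, intervalIntegral.integral_interval_sub_left
      hαint.intervalIntegrable hαint.intervalIntegrable]
  have hA_mono : Monotone A := fun x y hxy => sub_nonneg.1 <| (hA x y).symm ▸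
    mul_nonneg hτ (intervalIntegral.integral_nonneg hxy fun s _ => hα0 s)
  have hA_le : ∀ x ∈ univ, ∀ y ∈ univ, x ≤ y → A y - A x ≤ τ * ∫ s, α s := by
    intro x _ y _ hxy
    rw [hA, intervalIntegral.integral_of_le hxy]
    exact mul_le_mul_of_nonneg_left
      (setIntegral_le_integral hαint (.of_forall hα0)) hτ
  calc eVariationOn (fun x => τ • g (x, w x)) univ
      ≤ ENNReal.ofReal (τ * ℓ) * eVariationOn w univ + eVariationOn A univ := by
        refine eVariationOn_le_of_edist_le_add _ fun x _ y _ hxy => ?_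
        rw [edist_dist, edist_dist, edist_dist, dist_eq_norm, dist_eq_norm, Real.dist_eq,
          abs_of_nonneg (sub_nonneg.2 (hA_mono hxy)), ← ENNReal.ofReal_mul' (norm_nonneg _)]
        refine (ENNReal.ofReal_le_ofReal ?_).trans ENNReal.ofReal_add_le
        rw [hA]
        exact norm_smul_comp_sub_le hτ hLip hx hxy
    _ ≤ ENNReal.ofReal (τ * ℓ) * eVariationOn w univ + ENNReal.ofReal (τ * ∫ s, α s) := by
        grw [(hA_mono.monotoneOn univ).eVariationOn_le_ofReal hA_le]

end SourceTerm

theorem stmt1_general (N : ℕ)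
    (u w : ℝ → EuclideanSpace ℝ (Fin N))
    (hu : BoundedVariationOn u Set.univ)
    (hw : BoundedVariationOn w Set.univ)
    (τ : ℝ) (hτ : 0 ≤ τ)
    (ℓ : ℝ) (hℓ : 0 ≤ ℓ)
    (α : ℝ → ℝ) (hα0 : ∀ s, 0 ≤ α s) (hαint : MeasureTheory.Integrable α)
    (g : ℝ × EuclideanSpace ℝ (Fin N) → EuclideanSpace ℝ (Fin N))
    (hLip : ∀ (x : ℝ) (p q : EuclideanSpace ℝ (Fin N)),
      ‖g (x, p) - g (x, q)‖ ≤ ℓ * ‖p - q‖)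
    (hx : ∀ (x y : ℝ) (p : EuclideanSpace ℝ (Fin N)), x ≤ y →
      ‖g (y, p) - g (x, p)‖ ≤ ∫ s in x..y, α s) :
    BoundedVariationOn (fun x => u x + τ • g (x, w x)) Set.univ ∧
      |(eVariationOn (fun x => u x + τ • g (x, w x)) Set.univ).toReal -
          (eVariationOn u Set.univ).toReal| ≤
        τ * (ℓ * (eVariationOn w Set.univ).toReal + ∫ s, α s) := by
  have hsource := eVariationOn_smul_comp_le (w := w) hτ hα0 hαint hLip hx
  have hbound_ne_top :
      ENNReal.ofReal (τ * ℓ) * eVariationOn w univ + ENNReal.ofReal (τ * ∫ s, α s) ≠ ⊤ :=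
    ENNReal.add_ne_top.2 ⟨ENNReal.mul_ne_top ENNReal.ofReal_ne_top hw, ENNReal.ofReal_ne_top⟩
  have hsource_bv : BoundedVariationOn (fun x => τ • g (x, w x)) univ :=
    ne_top_of_le_ne_top hbound_ne_top hsource
  refine ⟨hu.add hsource_bv, (hu.abs_toReal_eVariationOn_add_sub_le hsource_bv).trans ?_⟩
  calc (eVariationOn (fun x => τ • g (x, w x)) univ).toReal
      ≤ (ENNReal.ofReal (τ * ℓ) * eVariationOn w univ
          + ENNReal.ofReal (τ * ∫ s, α s)).toReal := ENNReal.toReal_mono hbound_ne_top hsource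
    _ = τ * (ℓ * (eVariationOn w univ).toReal + ∫ s, α s) := by
      rw [ENNReal.toReal_add (ENNReal.mul_ne_top ENNReal.ofReal_ne_top hw) ENNReal.ofReal_ne_top,
        ENNReal.toReal_mul, ENNReal.toReal_ofReal (mul_nonneg hτ hℓ),
        ENNReal.toReal_ofReal (mul_nonneg hτ (integral_nonneg hα0))]
      ring

/-- first inequality of Lemma `timeEst`. The source update
`v x = u x + τ • g (x, w x)` changes the total variation by at most
`τ · (ℓ · Tot.Var.(w) + ∫ α)`. -/
theorem stmt1 (N : ℕ) (hN : 1 ≤ N)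
    (u w : ℝ → EuclideanSpace ℝ (Fin N))
    (hu : BoundedVariationOn u Set.univ)
    (hw : BoundedVariationOn w Set.univ)
    (τ : ℝ) (hτ : 0 ≤ τ)
    (ℓ : ℝ) (hℓ : 0 ≤ ℓ)
    (α : ℝ → ℝ) (hα0 : ∀ s, 0 ≤ α s) (hαint : MeasureTheory.Integrable α)
    (g : ℝ × EuclideanSpace ℝ (Fin N) → EuclideanSpace ℝ (Fin N))
    (hLip : ∀ (x : ℝ) (p q : EuclideanSpace ℝ (Fin N)),
      ‖g (x, p) - g (x, q)‖ ≤ ℓ * ‖p - q‖)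
    (hx : ∀ (x y : ℝ) (p : EuclideanSpace ℝ (Fin N)), x ≤ y →
      ‖g (y, p) - g (x, p)‖ ≤ ∫ s in x..y, α s) :
    BoundedVariationOn (fun x => u x + τ • g (x, w x)) Set.univ ∧
      |(eVariationOn (fun x => u x + τ • g (x, w x)) Set.univ).toReal -
          (eVariationOn u Set.univ).toReal| ≤
        τ * (ℓ * (eVariationOn w Set.univ).toReal + ∫ s, α s) :=
  stmt1_general N u w hu hw τ hτ ℓ hℓ α hα0 hαint g hLip hx
end

section
/- Let (μ_ν)_{ν∈ℕ} and μ be finite nonnegative Borel measures on ℝ such that μ_ν converges to μ weakly, i.e. ∫ f dμ_ν → ∫ f dμ for every bounded continuous f : ℝ → ℝ. Then for every point ξ ∈ ℝ there exists a sequence of radii r_ν ≥ 0 with r_ν → 0 such that μ_ν([ξ − r_ν, ξ + r_ν]) → μ({ξ}). -/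
/-!
Choose radii `δ k → 0` such that the spheres `∂B(ξ, δ k)` carry no `μ`-mass. By the portmanteau
theorem `μ_ν (B(ξ, δ k)) → μ (B(ξ, δ k))` as `ν → ∞` for each `k`, while
`μ (B(ξ, δ k)) → μ {ξ}` by continuity from above. A diagonal choice `k = K ν → ∞`, taking `K ν`
as large as the convergence at stage `ν` allows, gives the radii `r ν = δ (K ν)`.
-/

open Filter MeasureTheory

open scoped ENNReal Topology

theorem ENNReal.le_liminf_of_tendsto_add {ι : Type*} {L : Filter ι} {u v : ι → ℝ≥0∞}
    {a b : ℝ≥0∞} (ha : a ≠ ∞) (hb : b ≠ ∞) (huv : Tendsto (u + v) L (𝓝 (a + b)))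
    (hv : limsup v L ≤ b) : a ≤ liminf u L := by
  rcases L.eq_or_neBot with rfl | _
  · simp
  have hab : a + b ≠ ∞ := ENNReal.add_ne_top.2 ⟨ha, hb⟩
  have hgap : Tendsto (fun i ↦ (a + b) - (u + v) i) L (𝓝 0) := by
    simpa using ENNReal.Tendsto.sub tendsto_const_nhds huv (.inl hab)
  calc a = (a + b) - b := (ENNReal.add_sub_cancel_right hb).symm
    _ ≤ (a + b) - limsup v L := tsub_le_tsub_left hv _
    _ = liminf (fun i ↦ (a + b) - v i) L := (ENNReal.liminf_const_sub _ _ hab).symm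
    _ ≤ liminf ((fun i ↦ (u + v) i - v i) + fun i ↦ (a + b) - (u + v) i) L :=
      liminf_le_liminf (.of_forall fun i ↦ by
        simpa only [Pi.add_apply, add_comm] using tsub_le_tsub_add_tsub)
    _ = liminf (fun i ↦ (u + v) i - v i) L := ENNReal.liminf_add_of_right_tendsto_zero hgap _
    _ ≤ liminf u L := liminf_le_liminf (.of_forall fun i ↦ add_tsub_le_right)

namespace MeasureTheory.FiniteMeasure

variable {Ω ι : Type*} {L : Filter ι} [MeasurableSpace Ω] [TopologicalSpace Ω]
  [OpensMeasurableSpace Ω] [HasOuterApproxClosed Ω] {μ : FiniteMeasure Ω}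
  {μs : ι → FiniteMeasure Ω}

theorem le_liminf_measure_open_of_tendsto (μs_lim : Tendsto μs L (𝓝 μ)) {G : Set Ω}
    (G_open : IsOpen G) : (μ : Measure Ω) G ≤ L.liminf fun i ↦ (μs i : Measure Ω) G := by
  have hmass :
      Tendsto (fun i ↦ (μs i : Measure Ω) Set.univ) L (𝓝 ((μ : Measure Ω) Set.univ)) := by
    simpa [ennreal_mass] using ENNReal.tendsto_coe.2 μs_lim.mass
  refine ENNReal.le_liminf_of_tendsto_add (measure_ne_top _ G) (measure_ne_top _ Gᶜ) ?_
    (limsup_measure_closed_le_of_tendsto μs_lim G_open.isClosed_compl)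
  rw [measure_add_measure_compl G_open.measurableSet]
  exact hmass.congr fun i ↦ (measure_add_measure_compl G_open.measurableSet).symm

theorem tendsto_measure_of_null_frontier_of_tendsto (μs_lim : Tendsto μs L (𝓝 μ)) {E : Set Ω}
    (E_nullbdry : (μ : Measure Ω) (frontier E) = 0) :
    Tendsto (fun i ↦ (μs i : Measure Ω) E) L (𝓝 ((μ : Measure Ω) E)) :=
  tendsto_measure_of_le_liminf_measure_of_limsup_measure_le interior_subset subset_closure
    E_nullbdry (le_liminf_measure_open_of_tendsto μs_lim isOpen_interior)
    (limsup_measure_closed_le_of_tendsto μs_lim isClosed_closure)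

end MeasureTheory.FiniteMeasure

theorem exists_tendsto_atTop_tendsto_diag {α : Type*} [TopologicalSpace α] {g : ℕ → ℕ → α}
    {a : ℕ → α} {b : α} [(𝓝 b).IsCountablyGenerated] (hg : ∀ k, Tendsto (g k) atTop (𝓝 (a k)))
    (ha : Tendsto a atTop (𝓝 b)) :
    ∃ K : ℕ → ℕ, Tendsto K atTop atTop ∧ Tendsto (fun n ↦ g (K n) n) atTop (𝓝 b) := by
  classical
  obtain ⟨U, hU, hUb⟩ := (nhds_basis_opens b).exists_antitone_subbasis
  have hφ : ∀ k, ∃ j, k ≤ j ∧ a j ∈ U k := fun k ↦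
    ((eventually_ge_atTop k).and (ha.eventually (hUb.mem k))).exists
  choose φ hφk hφU using hφ
  have hev : ∀ k, ∀ᶠ n in atTop, g (φ k) n ∈ U k := fun k ↦
    (hg (φ k)).eventually ((hU k).2.mem_nhds (hφU k))
  let P : ℕ → ℕ → Prop := fun n k ↦ g (φ k) n ∈ U k
  let N : ℕ → ℕ := fun n ↦ Nat.findGreatest (P n) n
  have hN : ∀ k, ∀ᶠ n in atTop, k ≤ N n ∧ g (φ (N n)) n ∈ U k := fun k ↦ by
    filter_upwards [hev k, eventually_ge_atTop k] with n hkn hk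
    have hle : k ≤ N n := Nat.le_findGreatest (P := P n) hk hkn
    exact ⟨hle, hUb.antitone hle (Nat.findGreatest_spec (P := P n) hk hkn)⟩
  refine ⟨φ ∘ N, tendsto_atTop_mono (fun n ↦ hφk (N n)) ?_, ?_⟩
  · exact tendsto_atTop.2 fun k ↦ (hN k).mono fun _ h ↦ h.1
  · exact hUb.tendsto_right_iff.2 fun k _ ↦ (hN k).mono fun _ h ↦ h.2

section NormedSpace

variable {E : Type*} [NormedAddCommGroup E] [NormedSpace ℝ E] [MeasurableSpace E]
  [OpensMeasurableSpace E]

theorem exists_null_frontiers_closedBall (μ : Measure E) [SFinite μ] (x : E) :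
    ∃ rs : ℕ → ℝ, Tendsto rs atTop (𝓝 0) ∧
      ∀ n, 0 < rs n ∧ μ (frontier (Metric.closedBall x (rs n))) = 0 := by
  obtain ⟨rs, hrs, hnull⟩ := exists_null_frontiers_thickening μ {x}
  refine ⟨rs, hrs, fun n ↦ ⟨(hnull n).1, ?_⟩⟩
  rw [frontier_closedBall x (hnull n).1.ne', ← frontier_ball x (hnull n).1.ne',
    ← Metric.thickening_singleton]
  exact (hnull n).2

theorem MeasureTheory.FiniteMeasure.exists_tendsto_measure_closedBall_of_tendsto
    {μs : ℕ → FiniteMeasure E} {μ : FiniteMeasure E} (hμs : Tendsto μs atTop (𝓝 μ)) (x : E) :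
    ∃ r : ℕ → ℝ, (∀ n, 0 < r n) ∧ Tendsto r atTop (𝓝 0) ∧
      Tendsto (fun n ↦ (μs n : Measure E) (Metric.closedBall x (r n))) atTop
        (𝓝 ((μ : Measure E) {x})) := by
  obtain ⟨δ, hδ, hδnull⟩ := exists_null_frontiers_closedBall (μ : Measure E) x
  have hatom : Tendsto (fun k ↦ (μ : Measure E) (Metric.closedBall x (δ k))) atTop
      (𝓝 ((μ : Measure E) {x})) := by
    have hcth := (tendsto_measure_cthickening_of_isClosed
      ⟨1, one_pos, measure_ne_top (μ : Measure E) _⟩ (isClosed_singleton (x := x))).comp hδ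
    simpa [Function.comp_def, Metric.cthickening_singleton _ (hδnull _).1.le] using hcth
  obtain ⟨K, hK, hdiag⟩ := exists_tendsto_atTop_tendsto_diag
    (fun k ↦ tendsto_measure_of_null_frontier_of_tendsto hμs (hδnull k).2) hatom
  exact ⟨δ ∘ K, fun n ↦ (hδnull (K n)).1, hδ.comp hK, hdiag⟩

end NormedSpace

/-- Extraction of atoms under weak convergence of finite
nonnegative Borel measures on `ℝ`: there are radii `r_ν → 0` with
`μ_ν([ξ − r_ν, ξ + r_ν]) → μ({ξ})`. -/
theorem stmt6 (μs : ℕ → Measure ℝ) (μ : Measure ℝ)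
    [∀ ν, IsFiniteMeasure (μs ν)] [IsFiniteMeasure μ]
    (hweak : ∀ f : BoundedContinuousFunction ℝ ℝ,
      Tendsto (fun ν => ∫ x, f x ∂(μs ν)) atTop (nhds (∫ x, f x ∂μ)))
    (ξ : ℝ) :
    ∃ r : ℕ → ℝ, (∀ ν, 0 ≤ r ν) ∧ Tendsto r atTop (nhds 0) ∧
      Tendsto (fun ν => μs ν (Set.Icc (ξ - r ν) (ξ + r ν))) atTop (nhds (μ {ξ})) := by
  let ms : ℕ → FiniteMeasure ℝ := fun ν ↦ ⟨μs ν, inferInstance⟩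
  let m : FiniteMeasure ℝ := ⟨μ, inferInstance⟩
  have hlim : Tendsto ms atTop (𝓝 m) := FiniteMeasure.tendsto_iff_forall_integral_tendsto.2 hweak
  obtain ⟨r, hr_pos, hr, hball⟩ :=
    FiniteMeasure.exists_tendsto_measure_closedBall_of_tendsto hlim ξ
  refine ⟨r, fun ν ↦ (hr_pos ν).le, hr, ?_⟩
  simp only [Real.closedBall_eq_Icc] at hball
  exact hball
end
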